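/- Let X₁, X₂ ⊆ ℂⁿ be disjoint compact sets and let S₁ ⊆ X₁, S₂ ⊆ X₂ be relatively open subsets with S₁ ⊆ X̂₂ and S₂ ⊆ X̂₁. Then the polynomial hull of X₁ ∪ X₂ equals the polynomial hull of (X₁ \ S₁) ∪ (X₂ \ S₂). -/

import Mathlib

open Set

/-- The polynomial hull of a set `S ⊆ ℂⁿ`. -/
def polyHull (n : ℕ) (S : Set (Fin n → ℂ)) : Set (Fin n → ℂ) :=
  {x | ∀ Q : MvPolynomial (Fin n) ℂ,
    ‖MvPolynomial.eval x Q‖ ≤ sSup ((fun y => ‖MvPolynomial.eval y Q‖) '' S)}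

/-!
Suppose `|Q|` has a larger maximum `M` on `X₁ ∪ X₂` than on `(X₁ \ S₁) ∪ (X₂ \ S₂)`. Then the set
`K` where `|Q| = M` lies in `S₁ ∪ S₂`. Let `q ∈ K` be farthest from the origin, say `q ∈ S₁ ⊆ X̂₂`.
The affine polynomial `P = ⟨·, q⟩ + |q|² + 1` satisfies `|P| < |P(q)|` on the ball `|x| ≤ |q|` away
from `q`, so on `K ∩ X₂`, which misses `q` because `X₁ ∩ X₂ = ∅`. For large `N`, `|Q ^ N * P|` is
then smaller on the compact set `X₂` than at `q`, contradicting `q ∈ X̂₂`.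
-/

open MvPolynomial

section

variable {n : ℕ}

theorem norm_inner_add_lt_of_norm_le {E : Type*} [NormedAddCommGroup E] [InnerProductSpace ℂ E]
    {u v : E} (hvu : ‖v‖ ≤ ‖u‖) (hne : v ≠ u) :
    ‖inner ℂ u v + ((‖u‖ ^ 2 + 1 : ℝ) : ℂ)‖ < 2 * ‖u‖ ^ 2 + 1 := by
  have hinner : ‖inner ℂ u v‖ ≤ ‖u‖ ^ 2 := by
    nlinarith [norm_inner_le_norm (𝕜 := ℂ) u v, norm_nonneg u, norm_nonneg v]
  have hre : (inner ℂ u v).re < ‖u‖ ^ 2 := by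
    have hpos : 0 < ‖v - u‖ ^ 2 := by positivity [sub_ne_zero.2 hne]
    have hdist := norm_sub_sq (𝕜 := ℂ) v u
    rw [← inner_conj_symm, RCLike.conj_re, RCLike.re_to_complex] at hdist
    nlinarith [pow_le_pow_left₀ (norm_nonneg v) hvu 2]
  have hsq : ‖inner ℂ u v + ((‖u‖ ^ 2 + 1 : ℝ) : ℂ)‖ ^ 2 < (2 * ‖u‖ ^ 2 + 1) ^ 2 := by
    rw [Complex.sq_norm, Complex.normSq_add, ← Complex.sq_norm, Complex.conj_ofReal,
      Complex.re_mul_ofReal, Complex.normSq_ofReal]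
    nlinarith [norm_nonneg (inner ℂ u v)]
  exact lt_of_pow_lt_pow_left₀ 2 (by positivity) hsq

theorem exists_mvPolynomial_peak_on_ball (q : EuclideanSpace ℂ (Fin n)) :
    ∃ P : MvPolynomial (Fin n) ℂ, 0 < ‖eval q.ofLp P‖ ∧
      ∀ x : EuclideanSpace ℂ (Fin n), ‖x‖ ≤ ‖q‖ → x ≠ q → ‖eval x.ofLp P‖ < ‖eval q.ofLp P‖ := by
  set P : MvPolynomial (Fin n) ℂ :=
    ∑ j, X j * C (starRingEnd ℂ (q j)) + C ((‖q‖ ^ 2 + 1 : ℝ) : ℂ)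
  have heval : ∀ x : EuclideanSpace ℂ (Fin n),
      eval x.ofLp P = inner ℂ q x + ((‖q‖ ^ 2 + 1 : ℝ) : ℂ) := by
    intro x; simp [P, PiLp.inner_apply, RCLike.inner_apply]
  have hq : ‖eval q.ofLp P‖ = 2 * ‖q‖ ^ 2 + 1 := by
    have : eval q.ofLp P = ((2 * ‖q‖ ^ 2 + 1 : ℝ) : ℂ) := by
      rw [heval, inner_self_eq_norm_sq_to_K]; push_cast; simp only [Complex.coe_algebraMap]; ring
    rw [this, Complex.norm_of_nonneg (by positivity)]
  refine ⟨P, by rw [hq]; positivity, fun x hxq hne => ?_⟩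
  rw [heval, hq]
  exact norm_inner_add_lt_of_norm_le hxq hne

theorem notMem_polyHull_of_peak {Y : Set (Fin n → ℂ)} (hY : IsCompact Y) {q : Fin n → ℂ}
    {Q P : MvPolynomial (Fin n) ℂ} (hQ0 : 0 < ‖eval q Q‖) (hQ : ∀ y ∈ Y, ‖eval y Q‖ ≤ ‖eval q Q‖)
    (hP0 : 0 < ‖eval q P‖)
    (hP : ∀ y ∈ Y, ‖eval y Q‖ = ‖eval q Q‖ → ‖eval y P‖ < ‖eval q P‖) :
    q ∉ polyHull n Y := by
  set M := ‖eval q Q‖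
  set a := ‖eval q P‖
  let V : ℕ → Set (Fin n → ℂ) := fun N => {y | ‖eval y Q‖ ^ N * ‖eval y P‖ < M ^ N * a}
  have hV_open : ∀ N, IsOpen (V N) := fun N =>
    isOpen_lt (((continuous_eval Q).norm.pow N).mul (continuous_eval P).norm) continuous_const
  have hV_mono : ∀ y ∈ Y, Monotone fun N => y ∈ V N := by
    intro y hy N N' hNN' hN
    obtain ⟨k, rfl⟩ := Nat.exists_eq_add_of_le hNN'
    calc ‖eval y Q‖ ^ (N + k) * ‖eval y P‖
        = ‖eval y Q‖ ^ k * (‖eval y Q‖ ^ N * ‖eval y P‖) := by ring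
      _ ≤ M ^ k * (‖eval y Q‖ ^ N * ‖eval y P‖) := by gcongr; exact hQ y hy
      _ < M ^ k * (M ^ N * a) := mul_lt_mul_of_pos_left hN (by positivity)
      _ = M ^ (N + k) * a := by ring
  have hV_cover : Y ⊆ ⋃ N, V N := by
    intro y hy
    rcases (hQ y hy).lt_or_eq with hlt | heq
    · have hr : ‖eval y Q‖ / M < 1 := (div_lt_one hQ0).2 hlt
      have := ((tendsto_pow_atTop_nhds_zero_of_lt_one (by positivity) hr).mul_const
        ‖eval y P‖).eventually (gt_mem_nhds (by simpa using hP0))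
      obtain ⟨N, hN⟩ := this.exists
      rw [div_pow, div_mul_eq_mul_div, div_lt_iff₀ (by positivity)] at hN
      exact mem_iUnion.2 ⟨N, by simp only [V, mem_ofPred_eq]; linarith⟩
    · exact mem_iUnion.2 ⟨0, by simpa [V] using hP y hy heq⟩
  obtain ⟨t, ht⟩ := hY.elim_finite_subcover V hV_open hV_cover
  have hY_V : ∀ y ∈ Y, y ∈ V (t.sup id) := by
    intro y hy
    obtain ⟨N, hN, hyN⟩ := mem_iUnion₂.1 (ht hy)
    exact hV_mono y hy (Finset.le_sup (f := id) hN) hyN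
  have hnorm : ∀ x, ‖eval x (Q ^ t.sup id * P)‖ = ‖eval x Q‖ ^ t.sup id * ‖eval x P‖ := by
    simp
  intro hq
  have hq_le := hq (Q ^ t.sup id * P)
  rw [hnorm] at hq_le
  rcases Y.eq_empty_or_nonempty with rfl | hne
  · rw [image_empty, Real.sSup_empty] at hq_le
    exact hq_le.not_gt (by positivity)
  · refine hq_le.not_gt ((hY.sSup_lt_iff_of_continuous hne
      (continuous_eval _).norm.continuousOn _).2 fun y hy => ?_)
    rw [hnorm]
    exact hY_V y hy

theorem notMem_polyHull_of_farthest_max_point {Y : Set (Fin n → ℂ)} (hY : IsCompact Y)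
    {q : Fin n → ℂ} (hqY : q ∉ Y) {Q : MvPolynomial (Fin n) ℂ} (hQ0 : 0 < ‖eval q Q‖)
    (hQ : ∀ y ∈ Y, ‖eval y Q‖ ≤ ‖eval q Q‖)
    (hfar : ∀ y ∈ Y, ‖eval y Q‖ = ‖eval q Q‖ →
      ‖(WithLp.toLp 2 y : EuclideanSpace ℂ (Fin n))‖ ≤
        ‖(WithLp.toLp 2 q : EuclideanSpace ℂ (Fin n))‖) :
    q ∉ polyHull n Y := by
  obtain ⟨P, hP0, hP⟩ := exists_mvPolynomial_peak_on_ball (WithLp.toLp 2 q)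
  refine notMem_polyHull_of_peak hY hQ0 hQ hP0 fun y hy hyQ => hP _ (hfar y hy hyQ) ?_
  rintro ⟨⟩
  exact hqY hy

theorem sSup_norm_eval_le_of_subset {A B : Set (Fin n → ℂ)} (hB : IsCompact B) (hAB : A ⊆ B)
    (Q : MvPolynomial (Fin n) ℂ) :
    sSup ((fun y => ‖eval y Q‖) '' A) ≤ sSup ((fun y => ‖eval y Q‖) '' B) :=
  Real.sSup_le
    (by
      rintro _ ⟨y, hy, rfl⟩
      exact le_csSup (hB.bddAbove_image (continuous_eval Q).norm.continuousOn) ⟨y, hAB hy, rfl⟩)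
    (Real.sSup_nonneg (by rintro _ ⟨y, -, rfl⟩; positivity))

theorem polyHull_mono {A B : Set (Fin n → ℂ)} (hB : IsCompact B) (hAB : A ⊆ B) :
    polyHull n A ⊆ polyHull n B :=
  fun _ hx Q => (hx Q).trans (sSup_norm_eval_le_of_subset hB hAB Q)

theorem sSup_norm_eval_union_le_sSup_diff {X₁ X₂ S₁ S₂ : Set (Fin n → ℂ)} (h₁ : IsCompact X₁)
    (h₂ : IsCompact X₂) (hd : Disjoint X₁ X₂) (hS₁ : S₁ ⊆ polyHull n X₂)
    (hS₂ : S₂ ⊆ polyHull n X₁) (Q : MvPolynomial (Fin n) ℂ) :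
    sSup ((fun y => ‖eval y Q‖) '' (X₁ ∪ X₂)) ≤
      sSup ((fun y => ‖eval y Q‖) '' ((X₁ \ S₁) ∪ (X₂ \ S₂))) := by
  have hX : IsCompact (X₁ ∪ X₂) := h₁.union h₂
  have hf : Continuous fun y => ‖eval y Q‖ := (continuous_eval Q).norm
  have hbdd := hX.bddAbove_image hf.continuousOn
  set M := sSup ((fun y => ‖eval y Q‖) '' (X₁ ∪ X₂))
  by_contra! hlt
  have hM0 : 0 < M := (Real.sSup_nonneg (by rintro _ ⟨y, -, rfl⟩; positivity)).trans_lt hlt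
  have hXM : ∀ y ∈ X₁ ∪ X₂, ‖eval y Q‖ ≤ M := fun y hy => le_csSup hbdd ⟨y, hy, rfl⟩
  have hE : ∀ y ∈ (X₁ \ S₁) ∪ (X₂ \ S₂), ‖eval y Q‖ < M := fun y hy =>
    (le_csSup (hbdd.mono (image_mono (union_subset_union sdiff_subset sdiff_subset)))
      ⟨y, hy, rfl⟩).trans_lt hlt
  have hXne : (X₁ ∪ X₂).Nonempty := nonempty_iff_ne_empty.2 fun h => by simp [M, h] at hM0
  obtain ⟨x₀, hx₀, hx₀M⟩ := hX.exists_sSup_image_eq hXne hf.continuousOn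
  have hK : IsCompact ((X₁ ∪ X₂) ∩ (fun y => ‖eval y Q‖) ⁻¹' {M}) :=
    hX.inter_right (isClosed_singleton.preimage hf)
  obtain ⟨q, ⟨hqX, hqM : ‖eval q Q‖ = M⟩, hfar⟩ := hK.exists_isMaxOn ⟨x₀, hx₀, hx₀M.symm⟩
    ((PiLp.continuous_toLp 2 fun _ : Fin n => ℂ).norm.continuousOn)
  have hq_notMem : ∀ Y ⊆ X₁ ∪ X₂, IsCompact Y → q ∉ Y → q ∉ polyHull n Y :=
    fun Y hYX hY hqY => notMem_polyHull_of_farthest_max_point hY hqY (hqM ▸ hM0)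
      (fun y hy => hqM ▸ hXM y (hYX hy)) fun y hy hyM => hfar ⟨hYX hy, hyM.trans hqM⟩
  have hq_notMem_E : q ∉ (X₁ \ S₁) ∪ (X₂ \ S₂) := fun hqE => (hE q hqE).ne hqM
  rcases hqX with hq₁ | hq₂
  · have hqS₁ : q ∈ S₁ := by_contra fun h => hq_notMem_E (Or.inl ⟨hq₁, h⟩)
    exact hq_notMem X₂ subset_union_right h₂ (disjoint_left.1 hd hq₁) (hS₁ hqS₁)
  · have hqS₂ : q ∈ S₂ := by_contra fun h => hq_notMem_E (Or.inr ⟨hq₂, h⟩)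
    exact hq_notMem X₁ subset_union_left h₁ (disjoint_right.1 hd hq₂) (hS₂ hqS₂)

end

theorem polyHull_union_eq_of_relOpen_general (n : ℕ) (X₁ X₂ S₁ S₂ : Set (Fin n → ℂ))
    (h₁ : IsCompact X₁) (h₂ : IsCompact X₂) (hd : Disjoint X₁ X₂)
    (hS₁ : S₁ ⊆ polyHull n X₂) (hS₂ : S₂ ⊆ polyHull n X₁) :
    polyHull n (X₁ ∪ X₂) = polyHull n ((X₁ \ S₁) ∪ (X₂ \ S₂)) :=
  Subset.antisymm
    (fun _ hx Q => (hx Q).trans (sSup_norm_eval_union_le_sSup_diff h₁ h₂ hd hS₁ hS₂ Q))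
    (polyHull_mono (h₁.union h₂) (union_subset_union sdiff_subset sdiff_subset))

/-- Let `X₁, X₂ ⊆ ℂⁿ` be disjoint compact sets, and `S₁ ⊆ X₁`, `S₂ ⊆ X₂`
relatively open with `S₁ ⊆ X̂₂` and `S₂ ⊆ X̂₁`.  Then
`(X₁ ∪ X₂)^ = ((X₁ \ S₁) ∪ (X₂ \ S₂))^`. -/
theorem polyHull_union_eq_of_relOpen (n : ℕ) (X₁ X₂ S₁ S₂ : Set (Fin n → ℂ))
    (h₁ : IsCompact X₁) (h₂ : IsCompact X₂) (hd : Disjoint X₁ X₂)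
    (hS₁X : S₁ ⊆ X₁) (hS₂X : S₂ ⊆ X₂)
    (hS₁open : ∃ U, IsOpen U ∧ S₁ = U ∩ X₁)
    (hS₂open : ∃ U, IsOpen U ∧ S₂ = U ∩ X₂)
    (hS₁ : S₁ ⊆ polyHull n X₂) (hS₂ : S₂ ⊆ polyHull n X₁) :
    polyHull n (X₁ ∪ X₂) = polyHull n ((X₁ \ S₁) ∪ (X₂ \ S₂)) :=
  polyHull_union_eq_of_relOpen_general n X₁ X₂ S₁ S₂ h₁ h₂ hd hS₁ hS₂
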